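/- arXiv:2405.01443 — 2 statements merged into one kernel-verified Lean document; each statement's English description precedes it below -/
import Mathlib

section
/- (Contraction mapping principle for set-valued mappings) Let (X, ρ) be a complete metric space, T : X ⇉ X a set-valued mapping, x̄ ∈ X, and suppose there exist a > 0 and λ ∈ (0,1) such that the set gph T ∩ (B_a(x̄) × B_a(x̄)) is closed, d(x̄, T(x̄)) < a(1 − λ), and e(T(u) ∩ B_a(x̄), T(v)) ≤ λ ρ(u,v) for all u, v ∈ B_a(x̄). Then T has a fixed point in B_a(x̄): there exists x ∈ B_a(x̄) with x ∈ T(x). -/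
open Metric EMetric Filter

lemma exists_seq_aux {X : Type*} (P : ℕ → X → Prop) (Q : ℕ → X → X → Prop) (x₀ : X)
    (h0 : P 0 x₀) (hstep : ∀ k x, P k x → ∃ y, P (k + 1) y ∧ Q k x y) :
    ∃ f : ℕ → X, f 0 = x₀ ∧ ∀ k, P k (f k) ∧ Q k (f k) (f (k + 1)) := by
  choose g hg1 hg2 using hstep
  let F : ∀ k, {x // P k x} := fun k =>
    Nat.rec ⟨x₀, h0⟩ (fun k ih => ⟨g k ih.1 ih.2, hg1 k ih.1 ih.2⟩) k
  refine ⟨fun k => (F k).1, rfl, fun k => ⟨(F k).2, hg2 k (F k).1 (F k).2⟩⟩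

/-- Contraction mapping principle for set-valued mappings. -/
theorem stmt10 {X : Type*} [MetricSpace X] [CompleteSpace X]
    (T : X → Set X) (x₀ : X) (a lam : ℝ) (ha : 0 < a)
    (hlam0 : 0 < lam) (hlam1 : lam < 1)
    (hgph : IsClosed {p : X × X | p.2 ∈ T p.1 ∧
      p.1 ∈ Metric.closedBall x₀ a ∧ p.2 ∈ Metric.closedBall x₀ a})
    (hI : ∃ y ∈ T x₀, dist x₀ y < a * (1 - lam))
    (hII : ∀ u ∈ Metric.closedBall x₀ a, ∀ v ∈ Metric.closedBall x₀ a,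
      ∀ x ∈ T u ∩ Metric.closedBall x₀ a,
        EMetric.infEdist x (T v) ≤ ENNReal.ofReal (lam * dist u v)) :
    ∃ x ∈ Metric.closedBall x₀ a, x ∈ T x := by
  set C : ℝ := a * (1 - lam) with hC
  have hC0 : 0 < C := mul_pos ha (by linarith)
  -- invariant
  set P : ℕ → X → Prop := fun k x =>
    dist x₀ x ≤ a * (1 - lam ^ k) ∧ ∃ y ∈ T x, dist x y < lam ^ k * C with hP
  set Q : ℕ → X → X → Prop := fun k x y => y ∈ T x ∧ dist x y < lam ^ k * C with hQ
  have hball : ∀ k x, dist x₀ x ≤ a * (1 - lam ^ k) → x ∈ Metric.closedBall x₀ a := by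
    intro k x hx
    rw [Metric.mem_closedBall, dist_comm]
    have : (0:ℝ) ≤ lam ^ k := by positivity
    nlinarith
  have h0 : P 0 x₀ := by
    refine ⟨by simp, ?_⟩
    obtain ⟨y, hy, hd⟩ := hI
    exact ⟨y, hy, by simpa [hC] using hd⟩
  have hstep : ∀ k x, P k x → ∃ y, P (k + 1) y ∧ Q k x y := by
    intro k x ⟨hxb, y, hyT, hyd⟩
    have hlamk : (0:ℝ) < lam ^ k := by positivity
    have hyb : dist x₀ y ≤ a * (1 - lam ^ (k + 1)) := calc
      dist x₀ y ≤ dist x₀ x + dist x y := dist_triangle _ _ _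
      _ ≤ a * (1 - lam ^ k) + lam ^ k * C := by linarith
      _ = a * (1 - lam ^ (k + 1)) := by rw [hC]; ring
    refine ⟨y, ⟨hyb, ?_⟩, hyT, hyd⟩
    -- next point
    have hxball := hball k x hxb
    have hyball := hball (k + 1) y hyb
    have hle := hII x hxball y hyball y ⟨hyT, hyball⟩
    have hlt : EMetric.infEdist y (T y) < ENNReal.ofReal (lam ^ (k + 1) * C) := by
      refine lt_of_le_of_lt hle ?_
      rw [ENNReal.ofReal_lt_ofReal_iff (by positivity)]
      calc lam * dist x y < lam * (lam ^ k * C) := by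
            exact (mul_lt_mul_iff_right₀ hlam0).2 hyd
        _ = lam ^ (k + 1) * C := by ring
    obtain ⟨z, hzT, hz⟩ := EMetric.infEdist_lt_iff.mp hlt
    exact ⟨z, hzT, by rwa [edist_lt_ofReal] at hz⟩
  obtain ⟨f, hf0, hf⟩ := exists_seq_aux P Q x₀ h0 hstep
  have hdist : ∀ n, dist (f n) (f (n + 1)) ≤ C * lam ^ n := fun n =>
    le_of_lt (by have := (hf n).2.2; rw [mul_comm]; exact this)
  have hcauchy : CauchySeq f := cauchySeq_of_le_geometric lam C hlam1 hdist
  obtain ⟨x, hx⟩ := cauchySeq_tendsto_of_complete hcauchy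
  have hmem : ∀ n, f n ∈ Metric.closedBall x₀ a := fun n => hball n (f n) (hf n).1.1
  have hpair : Filter.Tendsto (fun n => (f n, f (n + 1))) Filter.atTop (nhds (x, x)) :=
    hx.prodMk_nhds (hx.comp (Filter.tendsto_add_atTop_nat 1))
  have hxin : (x, x) ∈ {p : X × X | p.2 ∈ T p.1 ∧
      p.1 ∈ Metric.closedBall x₀ a ∧ p.2 ∈ Metric.closedBall x₀ a} :=
    hgph.mem_of_tendsto hpair (Filter.Eventually.of_forall fun n =>
      ⟨(hf n).2.1, hmem n, hmem (n + 1)⟩)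
  exact ⟨x, hxin.2.1, hxin.1⟩
end

section
/- Let X, Y be Banach spaces, f : X → Y strictly differentiable at x̄ with Df(x̄) surjective, κ ≥ reg Df(x̄), and μ ≥ 0 with κμ < 1 such that ‖f(x) − f(x') − Df(x̄)(x − x')‖ ≤ μ‖x − x'‖ for all x, x' in B_ε(x̄). Let c = κ⁻¹ − μ and fix 0 < τ < ε. Then there exist neighborhoods U of x̄ and V of ȳ = f(x̄) such that B_τ(x) ⊆ B_ε(x̄) for all x ∈ U, ‖y − f(x)‖ ≤ cτ for all x ∈ U, y ∈ V (after shrinking), and the metric regularity estimate d(x, f⁻¹(y)) ≤ (κ/(1 − κμ)) ‖y − f(x)‖ holds for all (x,y) ∈ U × V. -/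
/-!
The regularity bound `κ` yields, for every `K > κ`, a nonlinear right inverse of `Df(x̄)` with
norm `K`. Since `f` is `μ`-close to `Df(x̄)` on `B_ε(x̄)`, the surjectivity theorem for maps
approximated by a linear map with a nonlinear right inverse puts every `y` with
`‖y - f x‖ ≤ (K⁻¹ - μ) ρ` into `f (B_ρ(x))` as long as `B_ρ(x) ⊆ B_ε(x̄)`, so that
`d(x, f⁻¹(y)) ≤ K / (1 - K μ) · ‖y - f x‖`; letting `K ↓ κ` gives the estimate. The choice
`‖y - f x‖ ≤ (κ⁻¹ - μ) τ` makes the radius needed at `K = κ` exactly `τ`, with room to spare.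
-/

open Metric Filter Topology
open scoped NNReal

section RightInverse

variable {𝕜 E F : Type*} [NormedAddCommGroup E] [NormedAddCommGroup F]

theorem ContinuousLinearMap.exists_preimage_norm_le_of_infDist_le [RCLike 𝕜]
    [NormedSpace 𝕜 E] [NormedSpace 𝕜 F] (A : E →L[𝕜] F) (hA : Function.Surjective A)
    {κ K : ℝ} (hreg : ∀ y : F, ‖y‖ ≤ 1 → infDist (0 : E) {x | A x = y} ≤ κ) (hK : κ < K)
    (y : F) : ∃ x, A x = y ∧ ‖x‖ ≤ K * ‖y‖ := by
  rcases eq_or_ne y 0 with rfl | hy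
  · exact ⟨0, map_zero A, by simp⟩
  have hny : 0 < ‖y‖ := norm_pos_iff.mpr hy
  set u : F := ((‖y‖⁻¹ : ℝ) : 𝕜) • y
  have hu : ‖u‖ ≤ 1 := by
    simp [u, norm_smul, inv_mul_cancel₀ hny.ne']
  obtain ⟨v, hv : A v = u, hvK⟩ :=
    (infDist_lt_iff (hA u)).mp ((hreg u hu).trans_lt hK)
  rw [dist_zero_left] at hvK
  refine ⟨((‖y‖ : ℝ) : 𝕜) • v, ?_, ?_⟩
  · rw [map_smul, hv, smul_smul, ← RCLike.ofReal_mul, mul_inv_cancel₀ hny.ne',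
      RCLike.ofReal_one, one_smul]
  · rw [norm_smul, RCLike.norm_ofReal, abs_norm, mul_comm]
    exact mul_le_mul_of_nonneg_right hvK.le hny.le

noncomputable def ContinuousLinearMap.NonlinearRightInverse.ofBound [NontriviallyNormedField 𝕜]
    [NormedSpace 𝕜 E] [NormedSpace 𝕜 F] (A : E →L[𝕜] F) (K : ℝ≥0)
    (hK : ∀ y, ∃ x, A x = y ∧ ‖x‖ ≤ K * ‖y‖) : A.NonlinearRightInverse where
  toFun y := (hK y).choose
  nnnorm := K
  bound' y := (hK y).choose_spec.2
  right_inv' y := (hK y).choose_spec.1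

end RightInverse

namespace ApproximatesLinearOn

variable {𝕜 E F : Type*} [NontriviallyNormedField 𝕜]
  [NormedAddCommGroup E] [NormedSpace 𝕜 E] [CompleteSpace E] [NormedAddCommGroup F]
  [NormedSpace 𝕜 F] {f : E → F} {A : E →L[𝕜] F} {s : Set E} {μ : ℝ≥0}

theorem infDist_preimage_le (hf : ApproximatesLinearOn f A s μ) (g : A.NonlinearRightInverse)
    (hg0 : 0 < g.nnnorm) (hgμ : g.nnnorm * μ < 1) {x : E} {y : F}
    (hball : closedBall x (g.nnnorm / (1 - g.nnnorm * μ) * ‖y - f x‖) ⊆ s) :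
    infDist x {x' | f x' = y} ≤ g.nnnorm / (1 - g.nnnorm * μ) * ‖y - f x‖ := by
  set K : ℝ := (g.nnnorm : ℝ)
  have hK0 : 0 < K := hg0
  have hKμ : 0 < 1 - K * μ := by
    have : K * μ < 1 := by exact_mod_cast hgμ
    linarith
  have hρ : 0 ≤ K / (1 - K * μ) * ‖y - f x‖ := by positivity
  have hradius : (K⁻¹ - μ) * (K / (1 - K * μ) * ‖y - f x‖) = ‖y - f x‖ := by
    field_simp
  have hy : y ∈ closedBall (f x) ((K⁻¹ - μ) * (K / (1 - K * μ) * ‖y - f x‖)) := by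
    rw [hradius, mem_closedBall, dist_eq_norm]
  obtain ⟨z, hz, hfz⟩ := hf.surjOn_closedBall_of_nonlinearRightInverse g hρ hball hy
  exact (infDist_le_dist_of_mem (show z ∈ {x' | f x' = y} from hfz)).trans
    (mem_closedBall'.mp hz)

theorem infDist_preimage_le_of_forall_gt (hf : ApproximatesLinearOn f A s μ) {κ : ℝ}
    (hκ : 0 < κ) (hreg : ∀ K > κ, ∀ y, ∃ x, A x = y ∧ ‖x‖ ≤ K * ‖y‖) (hκμ : κ * μ < 1)
    {x : E} {y : F} {ρ : ℝ} (hρ : κ / (1 - κ * μ) * ‖y - f x‖ < ρ)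
    (hball : closedBall x ρ ⊆ s) :
    infDist x {x' | f x' = y} ≤ κ / (1 - κ * μ) * ‖y - f x‖ := by
  set φ : ℝ → ℝ := fun K ↦ K / (1 - K * μ) * ‖y - f x‖
  have hφ : ContinuousAt φ κ := by
    have : 1 - κ * μ ≠ 0 := by linarith
    fun_prop (disch := assumption)
  have hsmall : ∀ᶠ K : ℝ in 𝓝 κ, K * μ < 1 ∧ φ K < ρ :=
    ((continuous_id.mul continuous_const).continuousAt.eventually_lt continuousAt_const hκμ).and
      (hφ.eventually_lt continuousAt_const hρ)
  refine ge_of_tendsto (hφ.tendsto.mono_left (nhdsWithin_le_nhds (s := Set.Ioi κ))) ?_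
  filter_upwards [nhdsWithin_le_nhds hsmall, self_mem_nhdsWithin] with K ⟨hKμ, hKρ⟩ hKκ
  have hK : 0 < K := hκ.trans hKκ
  exact hf.infDist_preimage_le (.ofBound A ⟨K, hK.le⟩ (hreg K hKκ)) hK hKμ
    ((closedBall_subset_closedBall hKρ.le).trans hball)

end ApproximatesLinearOn

theorem stmt17_general {X Y : Type*} [NormedAddCommGroup X] [NormedSpace ℝ X] [CompleteSpace X]
    [NormedAddCommGroup Y] [NormedSpace ℝ Y]
    (f : X → Y) (x₀ : X) (A : X →L[ℝ] Y)
    (hA : Function.Surjective A)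
    (κ : ℝ) (hκpos : 0 < κ)
    (hreg : ∀ y : Y, ‖y‖ ≤ 1 → Metric.infDist (0 : X) {x | A x = y} ≤ κ)
    (μ ε τ : ℝ) (hμ : 0 ≤ μ) (hκμ : κ * μ < 1)
    (hτ0 : 0 < τ) (hτε : τ < ε)
    (hlip : ∀ x ∈ Metric.closedBall x₀ ε, ∀ x' ∈ Metric.closedBall x₀ ε,
      ‖f x - f x' - A (x - x')‖ ≤ μ * ‖x - x'‖) :
    ∃ U ∈ nhds x₀, ∃ V ∈ nhds (f x₀),
      (∀ x ∈ U, Metric.closedBall x τ ⊆ Metric.closedBall x₀ ε) ∧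
      (∀ x ∈ U, ∀ y ∈ V, ‖y - f x‖ ≤ (κ⁻¹ - μ) * τ) ∧
      (∀ x ∈ U, ∀ y ∈ V,
        Metric.infDist x {x' | f x' = y} ≤ (κ / (1 - κ * μ)) * ‖y - f x‖) := by
  have happrox : ApproximatesLinearOn f A (closedBall x₀ ε) ⟨μ, hμ⟩ := hlip
  have hcont : ContinuousAt f x₀ :=
    happrox.continuousOn.continuousAt (closedBall_mem_nhds x₀ (by linarith))
  have hc : κ⁻¹ - μ = (1 - κ * μ) / κ := by field_simp
  have hκμ' : 0 < 1 - κ * μ := by linarith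
  have hcτ : 0 < (κ⁻¹ - μ) * τ / 2 := by rw [hc]; positivity
  set V := ball (f x₀) ((κ⁻¹ - μ) * τ / 2)
  set U := ball x₀ ((ε - τ) / 2) ∩ f ⁻¹' V
  have hU : U ∈ 𝓝 x₀ :=
    inter_mem (ball_mem_nhds x₀ (by linarith)) (hcont.preimage_mem_nhds (ball_mem_nhds _ hcτ))
  have hnear : ∀ x ∈ U, ∀ y ∈ V, ‖y - f x‖ ≤ (κ⁻¹ - μ) * τ := by
    rintro x ⟨-, hfx⟩ y hy
    rw [← dist_eq_norm]
    linarith [dist_triangle_right y (f x) (f x₀), mem_ball.mp hy, mem_ball.mp hfx]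
  refine ⟨U, hU, V, ball_mem_nhds _ hcτ, fun x hx ↦ ?_, hnear, fun x hx y hy ↦ ?_⟩
  · exact closedBall_subset_closedBall' (by linarith [mem_ball.mp hx.1])
  have hρ : κ / (1 - κ * μ) * ‖y - f x‖ < (ε + τ) / 2 := calc
    _ ≤ κ / (1 - κ * μ) * ((κ⁻¹ - μ) * τ) := by gcongr; exact hnear x hx y hy
    _ = τ := by rw [hc]; field_simp
    _ < (ε + τ) / 2 := by linarith
  have hball : closedBall x ((ε + τ) / 2) ⊆ closedBall x₀ ε :=
    closedBall_subset_closedBall' (by linarith [mem_ball.mp hx.1])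
  exact happrox.infDist_preimage_le_of_forall_gt hκpos
    (fun K hK ↦ A.exists_preimage_norm_le_of_infDist_le hA hreg hK) hκμ hρ hball

theorem stmt17 {X Y : Type*} [NormedAddCommGroup X] [NormedSpace ℝ X] [CompleteSpace X]
    [NormedAddCommGroup Y] [NormedSpace ℝ Y] [CompleteSpace Y]
    (f : X → Y) (x₀ : X) (A : X →L[ℝ] Y)
    (hstrict : HasStrictFDerivAt f A x₀) (hA : Function.Surjective A)
    (κ : ℝ) (hκpos : 0 < κ)
    (hreg : ∀ y : Y, ‖y‖ ≤ 1 → Metric.infDist (0 : X) {x | A x = y} ≤ κ)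
    (μ ε τ : ℝ) (hμ : 0 ≤ μ) (hκμ : κ * μ < 1)
    (hε : 0 < ε) (hτ0 : 0 < τ) (hτε : τ < ε)
    (hlip : ∀ x ∈ Metric.closedBall x₀ ε, ∀ x' ∈ Metric.closedBall x₀ ε,
      ‖f x - f x' - A (x - x')‖ ≤ μ * ‖x - x'‖) :
    ∃ U ∈ nhds x₀, ∃ V ∈ nhds (f x₀),
      (∀ x ∈ U, Metric.closedBall x τ ⊆ Metric.closedBall x₀ ε) ∧
      (∀ x ∈ U, ∀ y ∈ V, ‖y - f x‖ ≤ (κ⁻¹ - μ) * τ) ∧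
      (∀ x ∈ U, ∀ y ∈ V,
        Metric.infDist x {x' | f x' = y} ≤ (κ / (1 - κ * μ)) * ‖y - f x‖) :=
  stmt17_general f x₀ A hA κ hκpos hreg μ ε τ hμ hκμ hτ0 hτε hlip
end
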